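/- arXiv:2406.17392 — 4 statements merged into one kernel-verified Lean document; each statement's English description precedes it below -/
import Mathlib

section
/- Let n > m > 0 be integers with euclidean sequence n = l_0 > m = l_1 > ... > l_r = c = gcd(m,n) > l_{r+1} = 0 and quotients k_j = floor(l_{j-1}/l_j). Then the sum over j = 1 to r of k_j * l_j * (l_j - 1)/2 equals (n*m - n - m + c)/2. -/
/-- The euclidean sequence of remainders of the pair (m,n): `eucl m n 0 = n`,
`eucl m n 1 = m`, `eucl m n (j+2) = eucl m n j % eucl m n (j+1)`. -/
def eucl (m n : ℕ) : ℕ → ℕ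
  | 0 => n
  | 1 => m
  | j+2 => eucl m n j % eucl m n (j+1)

lemma eucl_gcd (m n : ℕ) : ∀ j, Nat.gcd (eucl m n (j+1)) (eucl m n j) = Nat.gcd m n
  | 0 => rfl
  | j+1 => by
    rw [show eucl m n (j+2) = eucl m n j % eucl m n (j+1) from rfl, ← Nat.gcd_rec]
    exact eucl_gcd m n j

theorem delta_sum_formula (m n r : ℕ) (hm : 0 < m) (hmn : m < n)
    (hr : eucl m n r ≠ 0) (hr0 : eucl m n (r + 1) = 0) :
    (∑ j ∈ Finset.Icc 1 r,
        ((eucl m n (j - 1) / eucl m n j : ℕ) : ℚ) * (eucl m n j : ℚ)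
          * ((eucl m n j : ℚ) - 1) / 2)
      = ((n : ℚ) * m - n - m + Nat.gcd m n) / 2 := by
  have hc : eucl m n r = Nat.gcd m n := by
    have h := eucl_gcd m n r
    rwa [hr0, Nat.gcd_zero_left] at h
  set F : ℕ → ℚ := fun j =>
    ((eucl m n j : ℚ) * (eucl m n (j+1) : ℚ) - (eucl m n j : ℚ) - (eucl m n (j+1) : ℚ)) / 2
    with hF
  have hterm : ∀ i : ℕ,
      ((eucl m n i / eucl m n (i+1) : ℕ) : ℚ) * (eucl m n (i+1) : ℚ)
        * ((eucl m n (i+1) : ℚ) - 1) / 2 = F i - F (i+1) := by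
    intro i
    have h := Nat.div_add_mod (eucl m n i) (eucl m n (i+1))
    have h2 : eucl m n (i+2) = eucl m n i % eucl m n (i+1) := rfl
    have hq : (eucl m n (i+1) : ℚ) * ((eucl m n i / eucl m n (i+1) : ℕ) : ℚ)
        + (eucl m n (i+2) : ℚ) = (eucl m n i : ℚ) := by
      rw [h2]; exact_mod_cast congrArg (Nat.cast : ℕ → ℚ) h
    simp only [hF]
    linear_combination ((eucl m n (i+1) : ℚ) - 1) / 2 * hq
  calc (∑ j ∈ Finset.Icc 1 r,
        ((eucl m n (j - 1) / eucl m n j : ℕ) : ℚ) * (eucl m n j : ℚ)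
          * ((eucl m n j : ℚ) - 1) / 2)
      = ∑ i ∈ Finset.range r, (F i - F (i+1)) := by
        rw [← Finset.Ico_add_one_right_eq_Icc, Finset.sum_Ico_eq_sum_range]
        refine Finset.sum_congr rfl fun i _ => ?_
        rw [show 1 + i = i + 1 by omega, Nat.add_sub_cancel]
        exact hterm i
    _ = F 0 - F r := Finset.sum_range_sub' F r
    _ = ((n : ℚ) * m - n - m + Nat.gcd m n) / 2 := by
        simp only [hF, show eucl m n 0 = n from rfl, show eucl m n 1 = m from rfl,
          hr0, hc]
        push_cast
        ring
end

section
/- Let n > m > 0 and n' > m' > 0 be integers with euclidean sequences (l_j)_{j=0}^{r+1} and (l'_j)_{j=0}^{r'+1} respectively, and quotients k_j = floor(l_{j-1}/l_j), k'_j = floor(l'_{j-1}/l'_j). Assume r ≤ r' and let 1 ≤ h ≤ r. If k_j = k'_j for every j = 1,...,h-1, then sum_{j=1}^{h} k_j * l_j * l'_j + l_{h+1} * l'_h < n * n'. -/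
lemma eucl_id (m n j : ℕ) :
    eucl m n (j+1) * (eucl m n j / eucl m n (j+1)) + eucl m n (j+2) = eucl m n j := by
  show eucl m n (j+1) * (eucl m n j / eucl m n (j+1)) + eucl m n j % eucl m n (j+1)
      = eucl m n j
  exact Nat.div_add_mod _ _

/-- The left-hand side of the key inequality. -/
def S (m n m' n' h : ℕ) : ℕ :=
  (∑ j ∈ Finset.Icc 1 h,
      (eucl m n (j - 1) / eucl m n j) * eucl m n j * eucl m' n' j)
    + eucl m n (h + 1) * eucl m' n' h

lemma S_one (m n m' n' : ℕ) : S m n m' n' 1 = n * m' := by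
  unfold S
  rw [Finset.Icc_self, Finset.sum_singleton]
  have h0 := eucl_id m n 0
  have : eucl m n 0 = n := rfl
  have : eucl m' n' 1 = m' := rfl
  nlinarith [eucl_id m n 0]

lemma S_two (m n m' n' : ℕ)
    (hq : eucl m n 0 / eucl m n 1 = eucl m' n' 0 / eucl m' n' 1) :
    S m n m' n' 2 = m * n' := by
  unfold S
  rw [show (2:ℕ) = 1 + 1 from rfl, Finset.sum_Icc_succ_top (by norm_num),
    Finset.Icc_self, Finset.sum_singleton]
  simp only [Nat.add_sub_cancel]
  have e1 : (eucl m n 1 / eucl m n 2) * eucl m n 2 * eucl m' n' 2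
      + eucl m n 3 * eucl m' n' 2 = eucl m n 1 * eucl m' n' 2 := by
    have := eucl_id m n 1
    nlinarith [this]
  have e2 : (eucl m n 0 / eucl m n 1) * eucl m n 1 * eucl m' n' 1
      + eucl m n 1 * eucl m' n' 2 = eucl m n 1 * eucl m' n' 0 := by
    rw [hq]
    have := eucl_id m' n' 0
    nlinarith [this]
  have h1 : eucl m n 1 = m := rfl
  have h0 : eucl m' n' 0 = n' := rfl
  calc (eucl m n 0 / eucl m n 1) * eucl m n 1 * eucl m' n' 1
        + (eucl m n 1 / eucl m n 2) * eucl m n 2 * eucl m' n' 2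
        + eucl m n 3 * eucl m' n' 2
      = (eucl m n 0 / eucl m n 1) * eucl m n 1 * eucl m' n' 1
        + eucl m n 1 * eucl m' n' 2 := by omega
    _ = eucl m n 1 * eucl m' n' 0 := e2
    _ = m * n' := by rw [h1, h0]

lemma S_step (m n m' n' h : ℕ)
    (hq : eucl m n (h+1) / eucl m n (h+2) = eucl m' n' (h+1) / eucl m' n' (h+2)) :
    S m n m' n' (h+3) = S m n m' n' (h+1) := by
  unfold S
  rw [show h+3 = (h+2)+1 from rfl, Finset.sum_Icc_succ_top (by omega),
    Finset.sum_Icc_succ_top (by omega : 1 ≤ h+2)]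
  simp only [Nat.add_sub_cancel]
  have e1 : (eucl m n (h+2) / eucl m n (h+3)) * eucl m n (h+3) * eucl m' n' (h+3)
      + eucl m n (h+4) * eucl m' n' (h+3) = eucl m n (h+2) * eucl m' n' (h+3) := by
    have := eucl_id m n (h+2)
    nlinarith [this]
  have e2 : (eucl m n (h+1) / eucl m n (h+2)) * eucl m n (h+2) * eucl m' n' (h+2)
      + eucl m n (h+2) * eucl m' n' (h+3) = eucl m n (h+2) * eucl m' n' (h+1) := by
    rw [hq]
    have := eucl_id m' n' (h+1)
    nlinarith [this]
  simp only [show h+1+1=h+2 from rfl, show h+2+1=h+3 from rfl,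
    show h+2+1+1=h+4 from rfl] at *
  omega

lemma S_main (m n m' n' : ℕ) : ∀ h, 1 ≤ h →
    (∀ j, 1 ≤ j → j ≤ h - 1 →
      eucl m n (j - 1) / eucl m n j = eucl m' n' (j - 1) / eucl m' n' j) →
    S m n m' n' h = n * m' ∨ S m n m' n' h = m * n' := by
  intro h
  induction h using Nat.strong_induction_on with
  | _ h ih =>
    match h with
    | 0 => exact fun h0 => absurd h0 (by omega)
    | 1 => exact fun _ _ => Or.inl (S_one m n m' n')
    | 2 => exact fun _ hk => Or.inr (S_two m n m' n' (hk 1 le_rfl (by omega)))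
    | (h+3) =>
      intro _ hk
      rw [S_step m n m' n' h (hk (h+2) (by omega) (by omega))]
      exact ih (h+1) (by omega) (by omega) (fun j hj1 hj2 => hk j hj1 (by omega))

theorem key_inequality (m n m' n' r r' h : ℕ)
    (hm : 0 < m) (hmn : m < n) (hm' : 0 < m') (hmn' : m' < n')
    (hr : eucl m n r ≠ 0) (hr0 : eucl m n (r + 1) = 0)
    (hr' : eucl m' n' r' ≠ 0) (hr0' : eucl m' n' (r' + 1) = 0)
    (hrr : r ≤ r') (hh1 : 1 ≤ h) (hhr : h ≤ r)
    (hk : ∀ j, 1 ≤ j → j ≤ h - 1 →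
      eucl m n (j - 1) / eucl m n j = eucl m' n' (j - 1) / eucl m' n' j) :
    (∑ j ∈ Finset.Icc 1 h,
        (eucl m n (j - 1) / eucl m n j) * eucl m n j * eucl m' n' j)
      + eucl m n (h + 1) * eucl m' n' h < n * n' := by
  have := S_main m n m' n' h hh1 hk
  have hgoal : S m n m' n' h < n * n' := by
    rcases this with h1 | h1 <;> rw [h1]
    · exact Nat.mul_lt_mul_of_le_of_lt (le_refl n) hmn' (by omega)
    · exact Nat.mul_lt_mul_of_lt_of_le hmn (le_refl n') (by omega)
  exact hgoal
end

section
/- Let n > m > 0 and n' > m' > 0 be integers with euclidean sequences (l_j) and (l'_j) and quotients (k_j)_{j=1}^r, (k'_j)_{j=1}^{r'}. Assume 1 ≤ h ≤ min(r, r') and k_j = k'_j for all j = 1,...,h-1. Then sum_{j=1}^{h} k_j * l_j * l'_j + l_{h+1} * l'_h equals l_1 * l'_0 if h is even and l_0 * l'_1 if h is odd. -/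
lemma eucl_rec (m n j : ℕ) :
    eucl m n j / eucl m n (j+1) * eucl m n (j+1) + eucl m n (j+2) = eucl m n j := by
  show _ + eucl m n j % eucl m n (j+1) = _
  exact Nat.div_add_mod' _ _

lemma eucl_rec' (m n j : ℕ) :
    ((eucl m n j / eucl m n (j+1) : ℕ) : ℤ) * eucl m n (j+1) + eucl m n (j+2)
      = eucl m n j := by
  exact_mod_cast eucl_rec m n j

lemma det_step (m n m' n' j : ℕ)
    (hk : eucl m n j / eucl m n (j+1) = eucl m' n' j / eucl m' n' (j+1)) :
    (eucl m n (j+1) : ℤ) * eucl m' n' (j+2) - eucl m n (j+2) * eucl m' n' (j+1)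
      = -((eucl m n j : ℤ) * eucl m' n' (j+1) - eucl m n (j+1) * eucl m' n' j) := by
  have h1 := eucl_rec' m n j
  have h2 := eucl_rec' m' n' j
  rw [hk] at h1
  linear_combination (eucl m n (j+1) : ℤ) * h2 - (eucl m' n' (j+1) : ℤ) * h1

lemma det (m n m' n' h : ℕ)
    (hk : ∀ i, 1 ≤ i → i ≤ h →
      eucl m n (i-1) / eucl m n i = eucl m' n' (i-1) / eucl m' n' i) :
    (eucl m n h : ℤ) * eucl m' n' (h+1) - eucl m n (h+1) * eucl m' n' h
      = (-1)^h * ((n : ℤ) * m' - m * n') := by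
  induction h with
  | zero => simp [eucl]
  | succ h ih =>
    have hstep : eucl m n h / eucl m n (h+1) = eucl m' n' h / eucl m' n' (h+1) := by
      have := hk (h+1) (by omega) le_rfl
      simpa using this
    rw [det_step m n m' n' h hstep, ih (fun i hi1 hi2 => hk i hi1 (by omega))]
    ring

lemma main_identity (m n m' n' h : ℕ) (hh1 : 1 ≤ h)
    (hk : ∀ j, 1 ≤ j → j ≤ h - 1 →
      eucl m n (j-1) / eucl m n j = eucl m' n' (j-1) / eucl m' n' j) :
    (∑ j ∈ Finset.Icc 1 h,
        ((eucl m n (j-1) / eucl m n j : ℕ) : ℤ) * eucl m n j * eucl m' n' j)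
      + eucl m n (h+1) * eucl m' n' h
      = if Even h then (m : ℤ) * n' else (n : ℤ) * m' := by
  induction h, hh1 using Nat.le_induction with
  | base =>
    simp only [Finset.Icc_self, Finset.sum_singleton, Nat.sub_self]
    have h1 : ((eucl m n 0 / eucl m n 1 : ℕ) : ℤ) * eucl m n 1 + eucl m n 2 = n := by
      exact_mod_cast eucl_rec m n 0
    have e1' : ((eucl m' n' 1 : ℕ) : ℤ) = m' := rfl
    rw [if_neg (by decide : ¬ Even 1), e1']
    linear_combination (m' : ℤ) * h1
  | succ h hh ih =>
    have ihh := ih (fun j hj1 hj2 => hk j hj1 (by omega))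
    rw [Finset.sum_Icc_succ_top (by omega : 1 ≤ h + 1)]
    have hdet := det m n m' n' h (fun i hi1 hi2 => hk i hi1 (by omega))
    have hrec := eucl_rec' m n h
    have hidx : h + 1 - 1 = h := by omega
    rw [hidx]
    by_cases he : Even h
    · rw [if_pos he] at ihh
      rw [if_neg (by simp [Nat.even_add_one, he])]
      have hpow : ((-1 : ℤ))^h = 1 := he.neg_one_pow
      rw [hpow] at hdet
      linear_combination ihh + (eucl m' n' (h+1) : ℤ) * hrec + hdet
    · rw [if_neg he] at ihh
      rw [if_pos (Nat.even_add_one.mpr he)]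
      have hpow : ((-1 : ℤ))^h = -1 := (Nat.not_even_iff_odd.mp he).neg_one_pow
      rw [hpow] at hdet
      linear_combination ihh + (eucl m' n' (h+1) : ℤ) * hrec + hdet

theorem key_identity (m n m' n' r r' h : ℕ)
    (hm : 0 < m) (hmn : m < n) (hm' : 0 < m') (hmn' : m' < n')
    (hr : eucl m n r ≠ 0) (hr0 : eucl m n (r + 1) = 0)
    (hr' : eucl m' n' r' ≠ 0) (hr0' : eucl m' n' (r' + 1) = 0)
    (hh1 : 1 ≤ h) (hhr : h ≤ r) (hhr' : h ≤ r')
    (hk : ∀ j, 1 ≤ j → j ≤ h - 1 →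
      eucl m n (j - 1) / eucl m n j = eucl m' n' (j - 1) / eucl m' n' j) :
    (∑ j ∈ Finset.Icc 1 h,
        (eucl m n (j - 1) / eucl m n j) * eucl m n j * eucl m' n' j)
      + eucl m n (h + 1) * eucl m' n' h
      = if Even h then m * n' else n * m' := by
  have H := main_identity m n m' n' h hh1 hk
  by_cases he : Even h
  · rw [if_pos he] at H ⊢
    exact_mod_cast H
  · rw [if_neg he] at H ⊢
    exact_mod_cast H
end

section
/- Let n > m > 0 be coprime integers with euclidean quotients k_1, ..., k_r. Then n + (m - 1) + sum_{j=1}^{r} k_j * l_j * (l_j - 1)/2 = (n*m + m + n - 1)/2, where (l_j) is the euclidean sequence of (m,n). -/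
open Finset

theorem sum_Icc_sub_mul_sub_one_telescope (l : ℕ → ℚ) (r : ℕ) :
    ∑ j ∈ Icc 1 r, (l (j - 1) - l (j + 1)) * (l j - 1)
      = l 0 * l 1 - l r * l (r + 1) - l 0 - l 1 + l r + l (r + 1) := by
  induction r with
  | zero => rw [Icc_eq_empty (by omega), sum_empty]; ring
  | succ r ih =>
    rw [sum_Icc_succ_top (by omega), ih, Nat.add_sub_cancel]
    ring

section Eucl

variable (m n : ℕ)

theorem eucl_div_mul_add_eucl_add_two (j : ℕ) :
    eucl m n j / eucl m n (j + 1) * eucl m n (j + 1) + eucl m n (j + 2) = eucl m n j :=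
  Nat.div_add_mod' _ _

theorem gcd_eucl_succ_eucl (j : ℕ) : Nat.gcd (eucl m n (j + 1)) (eucl m n j) = Nat.gcd m n := by
  induction j with
  | zero => rfl
  | succ j ih =>
    show Nat.gcd (eucl m n j % eucl m n (j + 1)) (eucl m n (j + 1)) = _
    rw [← Nat.gcd_rec, ih]

theorem eucl_eq_gcd_of_eucl_succ_eq_zero {r : ℕ} (hr0 : eucl m n (r + 1) = 0) :
    eucl m n r = Nat.gcd m n := by
  rw [← gcd_eucl_succ_eucl m n r, hr0, Nat.gcd_zero_left]

end Eucl

theorem codimension_formula_general (m n r : ℕ)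
    (hcop : Nat.Coprime m n)
    (hr0 : eucl m n (r + 1) = 0) :
    (n : ℚ) + ((m : ℚ) - 1)
        + (∑ j ∈ Finset.Icc 1 r,
            ((eucl m n (j - 1) / eucl m n j : ℕ) : ℚ) * (eucl m n j : ℚ)
              * ((eucl m n j : ℚ) - 1) / 2)
      = ((n : ℚ) * m + m + n - 1) / 2 := by
  have hterm : ∀ j ∈ Icc 1 r,
      ((eucl m n (j - 1) / eucl m n j : ℕ) : ℚ) * (eucl m n j : ℚ) * ((eucl m n j : ℚ) - 1) / 2
        = ((eucl m n (j - 1) : ℚ) - eucl m n (j + 1)) * ((eucl m n j : ℚ) - 1) / 2 := by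
    intro j hj
    obtain ⟨i, rfl⟩ : ∃ i, j = i + 1 := ⟨j - 1, by grind⟩
    have hdiv := congrArg (Nat.cast (R := ℚ)) (eucl_div_mul_add_eucl_add_two m n i)
    push_cast at hdiv
    rw [Nat.add_sub_cancel, ← hdiv]
    ring
  have hlast : eucl m n r = 1 := eucl_eq_gcd_of_eucl_succ_eq_zero m n hr0 ▸ hcop
  rw [sum_congr rfl hterm, ← sum_div,
    sum_Icc_sub_mul_sub_one_telescope (fun j => (eucl m n j : ℚ)), hr0, hlast]
  simp only [eucl]
  push_cast
  ring

theorem codimension_formula (m n r : ℕ) (hm : 0 < m) (hmn : m < n)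
    (hcop : Nat.Coprime m n)
    (hr : eucl m n r ≠ 0) (hr0 : eucl m n (r + 1) = 0) :
    (n : ℚ) + ((m : ℚ) - 1)
        + (∑ j ∈ Finset.Icc 1 r,
            ((eucl m n (j - 1) / eucl m n j : ℕ) : ℚ) * (eucl m n j : ℚ)
              * ((eucl m n j : ℚ) - 1) / 2)
      = ((n : ℚ) * m + m + n - 1) / 2 :=
  codimension_formula_general m n r hcop hr0
end
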